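/- arXiv:1908.02602 — 2 statements merged into one kernel-verified Lean document; each statement's English description precedes it below -/
import Mathlib

section
/- For every n ≥ 1, the double integral ∫₀^∞∫₀^∞ r₁^{n+1} r₂^{n+1} e^{-r₁²-r₂²} (log(r₁/r₂))² dr₁ dr₂ equals (1/8)·(Γ(n/2+1))²·ψ₁(n/2+1), where ψ₁ is the trigamma function. -/
open MeasureTheory Real

/-- The trigamma function `ψ₁(z) = (log Γ)''(z)`. -/
noncomputable def trigamma (z : ℝ) : ℝ :=
  deriv (deriv fun x : ℝ => Real.log (Real.Gamma x)) z

/-!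
Differentiating the Mellin transform `Γ(s) = ∫₀^∞ t^{s-1} e^{-t} dt` under the integral sign gives
`Γ^{(k)}(s) = ∫₀^∞ t^{s-1} log^k t e^{-t} dt`, and the substitution `t = r²` turns the moments
`M_k = ∫₀^∞ r^{n+1} e^{-r²} log^k r dr` into `Γ^{(k)}(n/2+1) / 2^{k+1}`. Expanding
`(log r₁ - log r₂)²` splits the double integral as `2 (M₀ M₂ - M₁²) = (Γ Γ'' - Γ'²) / 8`, and
`Γ Γ'' - Γ'² = Γ² ψ₁`.
-/

open Set Filter Asymptotics
open scoped Topology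

theorem integral_mul_mul_sub_sq {α : Type*} [MeasurableSpace α] {μ : Measure α} {w u : α → ℝ}
    (hw : Integrable w μ) (hwu : Integrable (fun x => w x * u x) μ)
    (hwu2 : Integrable (fun x => w x * u x ^ 2) μ) :
    ∫ x, ∫ y, w x * w y * (u x - u y) ^ 2 ∂μ ∂μ =
      2 * ((∫ x, w x ∂μ) * (∫ x, w x * u x ^ 2 ∂μ) - (∫ x, w x * u x ∂μ) ^ 2) := by
  set A := ∫ x, w x ∂μ
  set B := ∫ x, w x * u x ∂μ
  set C := ∫ x, w x * u x ^ 2 ∂μ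
  have inner (x : α) : ∫ y, w x * w y * (u x - u y) ^ 2 ∂μ =
      (w x * u x ^ 2) * A - (2 * (w x * u x)) * B + w x * C := by
    have h : (fun y => w x * w y * (u x - u y) ^ 2) = fun y =>
        (w x * u x ^ 2) * w y - (2 * w x * u x) * (w y * u y) + w x * (w y * u y ^ 2) := by
      funext y; ring
    rw [h, integral_add, integral_sub, integral_const_mul, integral_const_mul,
      integral_const_mul]
    · ring
    exacts [hw.const_mul _, hwu.const_mul _, (hw.const_mul _).sub (hwu.const_mul _),
      hwu2.const_mul _]
  simp_rw [inner]
  rw [integral_add, integral_sub, integral_mul_const, integral_mul_const, integral_mul_const,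
    integral_const_mul]
  · ring
  exacts [hwu2.mul_const _, (hwu.const_mul 2).mul_const _,
    (hwu2.mul_const _).sub ((hwu.const_mul 2).mul_const _), hw.mul_const _]

noncomputable def gammaLogIntegral (k : ℕ) (s : ℝ) : ℝ :=
  ∫ t in Ioi 0, t ^ (s - 1) * (log t ^ k * exp (-t))

theorem isBigO_log_pow_mul_exp_neg_atTop (k : ℕ) (a : ℝ) :
    (fun t => log t ^ k * exp (-t)) =O[atTop] (· ^ (-a)) := by
  induction k generalizing a with
  | zero =>
    simpa only [pow_zero, one_mul, neg_one_mul] using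
      (isLittleO_exp_neg_mul_rpow_atTop zero_lt_one (-a)).isBigO
  | succ k ih =>
    simpa only [smul_eq_mul, pow_succ, mul_comm, mul_left_comm] using
      isBigO_rpow_top_log_smul (lt_add_one a) (ih (a + 1))

theorem isBigO_log_pow_mul_exp_neg_nhdsGT_zero (k : ℕ) {b : ℝ} (hb : 0 < b) :
    (fun t => log t ^ k * exp (-t)) =O[𝓝[>] 0] (· ^ (-b)) := by
  induction k generalizing b with
  | zero =>
    refine IsBigO.of_bound 1 ?_
    filter_upwards [Ioo_mem_nhdsGT zero_lt_one] with t ⟨ht0, ht1⟩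
    rw [pow_zero, one_mul, norm_of_nonneg (exp_pos _).le, one_mul,
      norm_of_nonneg (rpow_nonneg ht0.le _)]
    exact (exp_le_one_iff.mpr (by linarith)).trans
      (one_le_rpow_of_pos_of_le_one_of_nonpos ht0 ht1.le (by linarith))
  | succ k ih =>
    simpa only [smul_eq_mul, pow_succ, mul_comm, mul_left_comm] using
      isBigO_rpow_zero_log_smul (half_lt_self hb) (ih (half_pos hb))

theorem integrableOn_rpow_mul_log_pow_mul_exp_neg (k : ℕ) {s : ℝ} (hs : 0 < s) :
    IntegrableOn (fun t => t ^ (s - 1) * (log t ^ k * exp (-t))) (Ioi 0) :=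
  mellin_convergent_of_isBigO_scalar
    (ContinuousOn.locallyIntegrableOn (fun t ht => by fun_prop (disch := exact ne_of_gt ht))
      measurableSet_Ioi)
    (isBigO_log_pow_mul_exp_neg_atTop k (s + 1)) (lt_add_one s)
    (isBigO_log_pow_mul_exp_neg_nhdsGT_zero k (half_pos hs)) (half_lt_self hs)

theorem hasDerivAt_gammaLogIntegral (k : ℕ) {s : ℝ} (hs : 0 < s) :
    HasDerivAt (gammaLogIntegral k) (gammaLogIntegral (k + 1) s) s := by
  let f (k : ℕ) (t : ℝ) : ℂ := (log t ^ k * exp (-t) : ℝ)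
  have mellin_f (k : ℕ) (s : ℝ) : mellin (f k) s = gammaLogIntegral k s := by
    rw [mellin, gammaLogIntegral, ← integral_complex_ofReal]
    refine setIntegral_congr_fun measurableSet_Ioi fun t ht => ?_
    simp [f, Complex.ofReal_cpow (le_of_lt ht)]
  have log_smul_f : (fun t => (log t : ℝ) • f k t) = f (k + 1) := by
    funext t
    simp only [f, Complex.real_smul, ← Complex.ofReal_mul, pow_succ]
    ring_nf
  have isBigO_f {l : Filter ℝ} {g : ℝ → ℝ} (h : (fun t => log t ^ k * exp (-t)) =O[l] g) :
      f k =O[l] g :=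
    isBigO_norm_left.mp (by simpa only [f, Complex.norm_real] using h.norm_left)
  have hderiv := (mellin_hasDerivAt_of_isBigO_rpow (s := s)
    (ContinuousOn.locallyIntegrableOn (fun t ht => by fun_prop (disch := exact ne_of_gt ht))
      measurableSet_Ioi)
    (isBigO_f (isBigO_log_pow_mul_exp_neg_atTop k (s + 1))) (by simp)
    (isBigO_f (isBigO_log_pow_mul_exp_neg_nhdsGT_zero k (half_pos hs)))
    (by simpa using half_lt_self hs)).2
  rw [log_smul_f] at hderiv
  simpa only [mellin_f, Complex.ofReal_re] using hderiv.real_of_complex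

theorem gammaLogIntegral_zero {s : ℝ} (hs : 0 < s) : gammaLogIntegral 0 s = Gamma s := by
  rw [Gamma_eq_integral hs, gammaLogIntegral]
  simp only [pow_zero, one_mul, mul_comm]

theorem hasDerivAt_Gamma_of_pos {s : ℝ} (hs : 0 < s) :
    HasDerivAt Gamma (gammaLogIntegral 1 s) s :=
  (hasDerivAt_gammaLogIntegral 0 hs).congr_of_eventuallyEq <|
    (eventually_gt_nhds hs).mono fun _ hx => (gammaLogIntegral_zero hx).symm

theorem trigamma_eq_of_pos {s : ℝ} (hs : 0 < s) :
    trigamma s = (gammaLogIntegral 2 s * Gamma s - gammaLogIntegral 1 s ^ 2) / Gamma s ^ 2 := by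
  have digamma_eq : deriv (fun x => log (Gamma x)) =ᶠ[𝓝 s]
      fun x => (Gamma x)⁻¹ * gammaLogIntegral 1 x := by
    filter_upwards [Ioi_mem_nhds hs] with x hx
    exact ((hasDerivAt_log (Gamma_pos_of_pos hx).ne').comp x (hasDerivAt_Gamma_of_pos hx)).deriv
  have hΓ := (Gamma_pos_of_pos hs).ne'
  rw [trigamma, digamma_eq.deriv_eq,
    (((hasDerivAt_Gamma_of_pos hs).fun_inv hΓ).fun_mul (hasDerivAt_gammaLogIntegral 1 hs)).deriv]
  field_simp
  ring

theorem rpow_mul_log_pow_mul_exp_neg_comp_rpow_two (k : ℕ) (s : ℝ) {x : ℝ} (hx : 0 < x) :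
    x ^ ((2 : ℝ) - 1) • ((x ^ (2 : ℝ)) ^ (s - 1) * (log (x ^ (2 : ℝ)) ^ k * exp (-x ^ (2 : ℝ))))
      = 2 ^ k * (x ^ (2 * s - 1) * exp (-x ^ 2) * log x ^ k) := by
  rw [← rpow_mul hx.le, log_rpow hx, rpow_two, show 2 * s - 1 = (2 - 1) + 2 * (s - 1) by ring,
    rpow_add hx, smul_eq_mul]
  ring

theorem integral_rpow_mul_exp_neg_sq_mul_log_pow (k : ℕ) (s : ℝ) :
    ∫ x in Ioi 0, x ^ (2 * s - 1) * exp (-x ^ 2) * log x ^ k =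
      gammaLogIntegral k s / 2 ^ (k + 1) := by
  rw [gammaLogIntegral, ← integral_comp_rpow_Ioi_of_pos two_pos (g := fun t =>
    t ^ (s - 1) * (log t ^ k * exp (-t))), eq_div_iff (by positivity), ← integral_mul_const]
  refine setIntegral_congr_fun measurableSet_Ioi fun x hx => ?_
  rw [mul_smul, rpow_mul_log_pow_mul_exp_neg_comp_rpow_two k s hx, smul_eq_mul]
  ring

theorem integrableOn_rpow_mul_exp_neg_sq_mul_log_pow (k : ℕ) {s : ℝ} (hs : 0 < s) :
    IntegrableOn (fun x => x ^ (2 * s - 1) * exp (-x ^ 2) * log x ^ k) (Ioi 0) := by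
  refine IntegrableOn.congr_fun (((integrableOn_Ioi_comp_rpow_iff' _ two_ne_zero).mpr
    (integrableOn_rpow_mul_log_pow_mul_exp_neg k hs)).const_mul (2 ^ k)⁻¹)
    (fun x hx => ?_) measurableSet_Ioi
  rw [rpow_mul_log_pow_mul_exp_neg_comp_rpow_two k s hx, inv_mul_cancel_left₀ (by positivity)]

theorem double_integral_eq_trigamma_general (n : ℕ) :
    (∫ r₁ in Set.Ioi (0 : ℝ), ∫ r₂ in Set.Ioi (0 : ℝ),
        r₁ ^ (n + 1) * r₂ ^ (n + 1) * Real.exp (-r₁ ^ 2 - r₂ ^ 2) *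
          Real.log (r₁ / r₂) ^ 2) =
      1 / 8 * Real.Gamma ((n : ℝ) / 2 + 1) ^ 2 * trigamma ((n : ℝ) / 2 + 1) := by
  set s : ℝ := (n : ℝ) / 2 + 1
  have hs : 0 < s := by positivity
  let w (x : ℝ) : ℝ := x ^ (2 * s - 1) * exp (-x ^ 2)
  have moment (k : ℕ) : ∫ x in Ioi 0, w x * log x ^ k = gammaLogIntegral k s / 2 ^ (k + 1) :=
    integral_rpow_mul_exp_neg_sq_mul_log_pow k s
  have integrand {x y : ℝ} (hx : 0 < x) (hy : 0 < y) :
      x ^ (n + 1) * y ^ (n + 1) * exp (-x ^ 2 - y ^ 2) * log (x / y) ^ 2 =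
        w x * w y * (log x - log y) ^ 2 := by
    have hexp : 2 * s - 1 = ((n + 1 : ℕ) : ℝ) := by push_cast; ring
    simp only [w, hexp, rpow_natCast, log_div hx.ne' hy.ne', sub_eq_add_neg (-x ^ 2), exp_add]
    ring
  have integrable (k : ℕ) : IntegrableOn (fun x => w x * log x ^ k) (Ioi 0) :=
    integrableOn_rpow_mul_exp_neg_sq_mul_log_pow k hs
  have moment_zero : ∫ x in Ioi 0, w x = Gamma s / 2 := by
    simpa [gammaLogIntegral_zero hs] using moment 0
  have moment_one : ∫ x in Ioi 0, w x * log x = gammaLogIntegral 1 s / 2 ^ 2 := by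
    simpa using moment 1
  rw [setIntegral_congr_fun measurableSet_Ioi fun x hx =>
      setIntegral_congr_fun measurableSet_Ioi fun y hy => integrand hx hy,
    integral_mul_mul_sub_sq (by simpa [IntegrableOn] using integrable 0)
      (by simpa [IntegrableOn] using integrable 1) (integrable 2),
    moment_zero, moment_one, moment 2, trigamma_eq_of_pos hs]
  field_simp
  ring

/-- `∫₀^∞∫₀^∞ r₁^{n+1} r₂^{n+1} e^{-r₁²-r₂²} (log(r₁/r₂))² dr₁ dr₂
      = (1/8)·(Γ(n/2+1))²·ψ₁(n/2+1)`. -/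
theorem double_integral_eq_trigamma (n : ℕ) (hn : 1 ≤ n) :
    (∫ r₁ in Set.Ioi (0 : ℝ), ∫ r₂ in Set.Ioi (0 : ℝ),
        r₁ ^ (n + 1) * r₂ ^ (n + 1) * Real.exp (-r₁ ^ 2 - r₂ ^ 2) *
          Real.log (r₁ / r₂) ^ 2) =
      1 / 8 * Real.Gamma ((n : ℝ) / 2 + 1) ^ 2 * trigamma ((n : ℝ) / 2 + 1) :=
  double_integral_eq_trigamma_general n
end

section
/- For φ ∈ BMO(ℝⁿ) with finite quadratic BMO norm ‖φ‖_*, the heat-semigroup norm satisfies ‖φ‖_H ≤ C√n·‖φ‖_* for an absolute constant C, where ‖φ‖_H = sup_{(y,t)} ((H_t*φ²)(y) − ((H_t*φ)(y))²)^{1/2}. -/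
/-!
Centre at the mean `a` of `φ` over `B(y, √(2nt))`. Since `H_t(y - ·)` has mass one, the heat
variance is at most `∫ H_t(y - x) (φ x - a)² dx`. The Gaussian is a superposition of balls,
`H_t(y - x) = ∫₀^∞ (4πt)^(-n/2) e^(-u) 1[|x - y| < 2√(tu)] du`, which turns this integral into the
mean of `⨍_{B(y, 2√(tu))} (φ - a)²` for `u` distributed as `Gamma(n/2 + 1)`. On each ball this is
the variance (at most `M²`) plus the squared distance between two ball means; chaining through
balls whose volumes double, at a cost of `√2 M` per step, bounds that distance by
`√2 M (n |log₂ (R / r)| + 1)`. With `s = n/2` one has `log (R / r)² = log (u / s)² / 4`, and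
`(log v)² ≤ v - 2 + 1/v`, whose right side at `v = u/s` has Gamma mean `1/s`; so the factor `n²`
is reduced to `O(n)` and the total is at most `(5 + 8n) M²`.
-/

open MeasureTheory Real

/-- The heat kernel on ℝⁿ. -/
noncomputable def heatKernel (n : ℕ) (t : ℝ) (y : EuclideanSpace ℝ (Fin n)) : ℝ :=
  (4 * π * t) ^ (-(n : ℝ) / 2) * Real.exp (-‖y‖ ^ 2 / (4 * t))

open Set Metric Module
open scoped ENNReal

section Variance

variable {α : Type*} [MeasurableSpace α] {μ : Measure α}

/-- The paper's `⟨f²⟩_s - ⟨f⟩_s²`; `‖f‖_*²` is its supremum over balls. -/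
noncomputable def setVariance (μ : Measure α) (s : Set α) (f : α → ℝ) : ℝ :=
  ⨍ x in s, f x ^ 2 ∂μ - (⨍ x in s, f x ∂μ) ^ 2

theorem integral_mul_sub_sq {w f : α → ℝ} (hw : Integrable w μ)
    (hwf : Integrable (fun x => w x * f x) μ) (hwf2 : Integrable (fun x => w x * f x ^ 2) μ)
    (hw1 : ∫ x, w x ∂μ = 1) (b : ℝ) :
    ∫ x, w x * (f x - b) ^ 2 ∂μ =
      (∫ x, w x * f x ^ 2 ∂μ - (∫ x, w x * f x ∂μ) ^ 2) + (∫ x, w x * f x ∂μ - b) ^ 2 := by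
  have hexp : (fun x => w x * (f x - b) ^ 2) =
      fun x => w x * f x ^ 2 - 2 * b * (w x * f x) + b ^ 2 * w x := by
    ext x; ring
  rw [hexp, integral_add (by exact hwf2.sub (hwf.const_mul _)) (hw.const_mul _),
    integral_sub hwf2 (hwf.const_mul _), integral_const_mul, integral_const_mul, hw1]
  ring

theorem setAverage_sub_sq {s : Set α} {f : α → ℝ} (hs₀ : μ s ≠ 0) (hs : μ s ≠ ∞)
    (hf : MemLp f 2 (μ.restrict s)) (b : ℝ) :
    ⨍ x in s, (f x - b) ^ 2 ∂μ = setVariance μ s f + (⨍ x in s, f x ∂μ - b) ^ 2 := by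
  have : IsFiniteMeasure (μ.restrict s) := isFiniteMeasure_restrict.2 hs
  simp only [setVariance, setAverage_eq, smul_eq_mul, ← integral_const_mul]
  refine integral_mul_sub_sq (integrable_const _) ((hf.integrable one_le_two).const_mul _)
    (hf.integrable_sq.const_mul _) ?_ b
  rw [integral_const, smul_eq_mul, measureReal_restrict_apply_univ,
    mul_inv_cancel₀ ((measureReal_ne_zero_iff hs).2 hs₀)]

theorem setVariance_nonneg {s : Set α} {f : α → ℝ} (hs₀ : μ s ≠ 0) (hs : μ s ≠ ∞)
    (hf : MemLp f 2 (μ.restrict s)) : 0 ≤ setVariance μ s f := by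
  have h := setAverage_sub_sq hs₀ hs hf (⨍ x in s, f x ∂μ)
  rw [sub_self, sq, mul_zero, add_zero] at h
  rw [← h, setAverage_eq, smul_eq_mul]
  exact mul_nonneg (inv_nonneg.2 measureReal_nonneg)
    (setIntegral_nonneg_of_ae_restrict (ae_of_all _ fun x => sq_nonneg _))

theorem sq_setAverage_sub_le {s : Set α} {f : α → ℝ} (hs₀ : μ s ≠ 0) (hs : μ s ≠ ∞)
    (hf : MemLp f 2 (μ.restrict s)) (b : ℝ) :
    (⨍ x in s, f x ∂μ - b) ^ 2 ≤ ⨍ x in s, (f x - b) ^ 2 ∂μ := by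
  rw [setAverage_sub_sq hs₀ hs hf]
  linarith [setVariance_nonneg hs₀ hs hf]

theorem sq_setAverage_sub_setAverage_le {s t : Set α} {f : α → ℝ} (hst : s ⊆ t)
    (hs₀ : μ s ≠ 0) (ht : μ t ≠ ∞) (hf : MemLp f 2 (μ.restrict t)) {K : ℝ}
    (hK : μ.real t ≤ K * μ.real s) :
    (⨍ x in s, f x ∂μ - ⨍ x in t, f x ∂μ) ^ 2 ≤ K * setVariance μ t f := by
  set b := ⨍ x in t, f x ∂μ
  have : IsFiniteMeasure (μ.restrict t) := isFiniteMeasure_restrict.2 ht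
  have hs : μ s ≠ ∞ := ne_top_of_le_ne_top ht (measure_mono hst)
  have ht₀ : μ t ≠ 0 := fun h => hs₀ (measure_mono_null hst h)
  have hs_pos : 0 < μ.real s := ENNReal.toReal_pos hs₀ hs
  have ht_pos : 0 < μ.real t := ENNReal.toReal_pos ht₀ ht
  have hI : 0 ≤ ∫ x in t, (f x - b) ^ 2 ∂μ :=
    setIntegral_nonneg_of_ae_restrict (ae_of_all _ fun x => sq_nonneg _)
  calc (⨍ x in s, f x ∂μ - b) ^ 2
      ≤ ⨍ x in s, (f x - b) ^ 2 ∂μ :=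
        sq_setAverage_sub_le hs₀ hs (hf.mono_measure (Measure.restrict_mono hst le_rfl)) b
    _ = (μ.real s)⁻¹ * ∫ x in s, (f x - b) ^ 2 ∂μ := by rw [setAverage_eq, smul_eq_mul]
    _ ≤ (μ.real s)⁻¹ * ∫ x in t, (f x - b) ^ 2 ∂μ := by
        refine mul_le_mul_of_nonneg_left ?_ (inv_nonneg.2 measureReal_nonneg)
        exact setIntegral_mono_set (hf.sub (memLp_const b)).integrable_sq
          (ae_of_all _ fun x => sq_nonneg _) (ae_of_all _ hst)
    _ ≤ K * ((μ.real t)⁻¹ * ∫ x in t, (f x - b) ^ 2 ∂μ) := by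
        rw [← mul_assoc]
        refine mul_le_mul_of_nonneg_right ?_ hI
        rw [le_mul_inv_iff₀ ht_pos, inv_mul_le_iff₀ hs_pos, mul_comm]
        exact hK
    _ = K * setVariance μ t f := by
        rw [← smul_eq_mul (μ.real t)⁻¹, ← setAverage_eq, setAverage_sub_sq ht₀ ht hf, sub_self,
          sq, mul_zero, add_zero]

end Variance

section Chaining

variable {g : ℝ → ℝ} {q D : ℝ}

theorem abs_sub_le_of_le_pow_mul (hq : 1 < q)
    (hstep : ∀ r R, 0 < r → r ≤ R → R ≤ q * r → |g r - g R| ≤ D) (N : ℕ) :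
    ∀ r R, 0 < r → r ≤ R → R ≤ q ^ N * r → |g r - g R| ≤ N * D := by
  induction N with
  | zero =>
    intro r R _ hrR hR
    rw [pow_zero, one_mul] at hR
    simp [le_antisymm hR hrR]
  | succ N ih =>
    intro r R hr hrR hR
    set ρ := min R (q * r)
    have hrρ : r ≤ ρ := le_min hrR (le_mul_of_one_le_left hr.le hq.le)
    have hRρ : R ≤ q ^ N * ρ := by
      rcases min_cases R (q * r) with ⟨h, -⟩ | ⟨h, -⟩
      · rw [show ρ = R from h]
        exact le_mul_of_one_le_left (hr.trans_le hrR).le (one_le_pow₀ hq.le)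
      · rwa [show ρ = q * r from h, ← mul_assoc, ← pow_succ]
    calc |g r - g R| ≤ |g r - g ρ| + |g ρ - g R| := abs_sub_le _ _ _
      _ ≤ D + N * D := add_le_add (hstep r ρ hr hrρ (min_le_right _ _))
          (ih ρ R (hr.trans_le hrρ) (min_le_left _ _) hRρ)
      _ = (N + 1 : ℕ) * D := by push_cast; ring

theorem abs_sub_le_logb_add_one_mul (hq : 1 < q)
    (hstep : ∀ r R, 0 < r → r ≤ R → R ≤ q * r → |g r - g R| ≤ D) {r R : ℝ} (hr : 0 < r)
    (hrR : r ≤ R) : |g r - g R| ≤ (logb q (R / r) + 1) * D := by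
  have hD : 0 ≤ D := by
    simpa using hstep r r hr le_rfl (le_mul_of_one_le_left hr.le hq.le)
  have hL : 0 ≤ logb q (R / r) := logb_nonneg hq ((one_le_div hr).2 hrR)
  refine (abs_sub_le_of_le_pow_mul hq hstep ⌈logb q (R / r)⌉₊ r R hr hrR ?_).trans
    (mul_le_mul_of_nonneg_right (Nat.ceil_lt_add_one hL).le hD)
  rw [← div_le_iff₀ hr, ← rpow_natCast]
  calc R / r = q ^ logb q (R / r) :=
        (rpow_logb (by linarith) hq.ne' (div_pos (hr.trans_le hrR) hr)).symm
    _ ≤ q ^ (⌈logb q (R / r)⌉₊ : ℝ) := rpow_le_rpow_of_exponent_le hq.le (Nat.le_ceil _)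

end Chaining

section BallOscillation

variable {E : Type*} [NormedAddCommGroup E] [NormedSpace ℝ E] [FiniteDimensional ℝ E]
  [MeasurableSpace E] [BorelSpace E] {μ : Measure E} [μ.IsAddHaarMeasure]

theorem measureReal_ball_eq_div_pow_mul (x : E) {r R : ℝ} (hr : 0 < r) (hR : 0 < R) :
    μ.real (ball x R) = (R / r) ^ finrank ℝ E * μ.real (ball x r) := by
  simp only [Measure.real, Measure.addHaar_ball_of_pos μ x hR, Measure.addHaar_ball_of_pos μ x hr,
    ENNReal.toReal_mul, ENNReal.toReal_ofReal (pow_nonneg hR.le _),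
    ENNReal.toReal_ofReal (pow_nonneg hr.le _)]
  rw [div_pow]
  field_simp

theorem sq_setAverage_ball_sub_le_two_mul (hd : 0 < finrank ℝ E) (y : E) {φ : E → ℝ} {r R : ℝ}
    (hr : 0 < r) (hrR : r ≤ R) (hR : R ≤ 2 ^ ((finrank ℝ E : ℝ)⁻¹) * r)
    (hφ : MemLp φ 2 (μ.restrict (ball y R))) :
    (⨍ x in ball y r, φ x ∂μ - ⨍ x in ball y R, φ x ∂μ) ^ 2 ≤ 2 * setVariance μ (ball y R) φ := by
  refine sq_setAverage_sub_setAverage_le (ball_subset_ball hrR) (measure_ball_pos μ y hr).ne'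
    measure_ball_lt_top.ne hφ ?_
  rw [measureReal_ball_eq_div_pow_mul y hr (hr.trans_le hrR)]
  refine mul_le_mul_of_nonneg_right ?_ measureReal_nonneg
  calc (R / r) ^ finrank ℝ E ≤ (2 ^ ((finrank ℝ E : ℝ)⁻¹)) ^ finrank ℝ E :=
        pow_le_pow_left₀ (div_nonneg (hr.le.trans hrR) hr.le) ((div_le_iff₀ hr).2 hR) _
    _ = 2 := rpow_inv_natCast_pow zero_le_two hd.ne'

theorem abs_setAverage_ball_sub_le (hd : 0 < finrank ℝ E) (y : E) {φ : E → ℝ} {M : ℝ}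
    (hM : 0 ≤ M) (hφ : ∀ r, 0 < r → MemLp φ 2 (μ.restrict (ball y r)))
    (hvar : ∀ r, 0 < r → setVariance μ (ball y r) φ ≤ M ^ 2) {r R : ℝ} (hr : 0 < r)
    (hR : 0 < R) :
    |⨍ x in ball y r, φ x ∂μ - ⨍ x in ball y R, φ x ∂μ| ≤
      (finrank ℝ E * |log (R / r)| / log 2 + 1) * (√2 * M) := by
  set q : ℝ := 2 ^ ((finrank ℝ E : ℝ)⁻¹)
  have hq : 1 < q := one_lt_rpow one_lt_two (by positivity)
  have hlogb : ∀ x, logb q x = finrank ℝ E * log x / log 2 := by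
    intro x
    rw [logb, log_rpow two_pos]
    field_simp
  have hstep : ∀ r R, 0 < r → r ≤ R → R ≤ q * r →
      |⨍ x in ball y r, φ x ∂μ - ⨍ x in ball y R, φ x ∂μ| ≤ √2 * M := by
    intro r R hr hrR hR
    refine abs_le_of_sq_le_sq ?_ (by positivity)
    calc _ ≤ 2 * setVariance μ (ball y R) φ :=
          sq_setAverage_ball_sub_le_two_mul hd y hr hrR hR (hφ R (hr.trans_le hrR))
      _ ≤ 2 * M ^ 2 := by linarith [hvar R (hr.trans_le hrR)]
      _ = (√2 * M) ^ 2 := by rw [mul_pow, sq_sqrt zero_le_two]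
  rcases le_total r R with hrR | hRr
  · have := abs_sub_le_logb_add_one_mul hq hstep hr hrR
    rwa [hlogb, ← abs_of_nonneg (log_nonneg ((one_le_div hr).2 hrR))] at this
  · have := abs_sub_le_logb_add_one_mul hq hstep hR hRr
    rwa [hlogb, abs_sub_comm, ← abs_of_nonneg (log_nonneg ((one_le_div hR).2 hRr)),
      show |log (r / R)| = |log (R / r)| by rw [← abs_neg, ← log_inv, inv_div]] at this

theorem setAverage_sub_setAverage_ball_sq_le (hd : 0 < finrank ℝ E) (y : E) {φ : E → ℝ} {M : ℝ}
    (hM : 0 ≤ M) (hφ : ∀ r, 0 < r → MemLp φ 2 (μ.restrict (ball y r)))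
    (hvar : ∀ r, 0 < r → setVariance μ (ball y r) φ ≤ M ^ 2) {r R : ℝ} (hr : 0 < r)
    (hR : 0 < R) :
    ⨍ x in ball y r, (φ x - ⨍ x in ball y R, φ x ∂μ) ^ 2 ∂μ ≤
      M ^ 2 * (5 + 16 * finrank ℝ E ^ 2 * log (R / r) ^ 2) := by
  set A := finrank ℝ E * |log (R / r)|
  have hA : 0 ≤ A := by positivity
  have hx : A / log 2 ≤ 2 * A := by
    rw [div_le_iff₀ (log_pos one_lt_two)]
    nlinarith [log_two_gt_d9]
  rw [setAverage_sub_sq (measure_ball_pos μ y hr).ne' measure_ball_lt_top.ne (hφ r hr),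
    ← sq_abs (_ - _)]
  calc _ ≤ M ^ 2 + ((A / log 2 + 1) * (√2 * M)) ^ 2 := by
        gcongr
        · exact hvar r hr
        · exact abs_setAverage_ball_sub_le hd y hM hφ hvar hr hR
    _ = M ^ 2 * (1 + 2 * (A / log 2 + 1) ^ 2) := by rw [mul_pow, mul_pow, sq_sqrt zero_le_two]; ring
    _ ≤ M ^ 2 * (1 + 2 * (2 * A + 1) ^ 2) := by gcongr
    _ ≤ M ^ 2 * (5 + 16 * finrank ℝ E ^ 2 * log (R / r) ^ 2) := by
        have hA2 : A ^ 2 = finrank ℝ E ^ 2 * log (R / r) ^ 2 := by rw [mul_pow, sq_abs]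
        refine mul_le_mul_of_nonneg_left ?_ (sq_nonneg M)
        nlinarith [sq_nonneg (2 * A - 1)]

end BallOscillation

section GammaIntegrals

theorem sq_log_le_sub_two_add_inv {v : ℝ} (hv : 0 < v) : log v ^ 2 ≤ v - 2 + v⁻¹ := by
  set x := log v / 2
  have hx : x ^ 2 ≤ sinh x ^ 2 := by
    rcases le_total 0 x with h | h
    · exact pow_le_pow_left₀ h (self_le_sinh_iff.2 h) 2
    · nlinarith [sinh_le_self_iff.2 h]
  have hexp : exp x ^ 2 = v := by rw [sq, ← exp_add, add_halves, exp_log hv]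
  have hsinh : 4 * sinh x ^ 2 = v - 2 + v⁻¹ := by
    rw [sinh_eq, exp_neg, ← hexp]
    field_simp
    ring
  have hlog : log v = 2 * x := by ring
  rw [hlog]
  linarith

variable {p s : ℝ}

theorem integrableOn_exp_neg_mul_rpow (hp : -1 < p) :
    IntegrableOn (fun u => exp (-u) * u ^ p) (Ioi 0) := by
  simpa using GammaIntegral_convergent (s := p + 1) (by linarith)

theorem integral_exp_neg_mul_rpow_eq_Gamma (hp : -1 < p) :
    ∫ u in Ioi 0, exp (-u) * u ^ p = Gamma (p + 1) := by
  rw [Gamma_eq_integral (by linarith), add_sub_cancel_right]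

theorem exp_neg_mul_rpow_mul_div_sub_two_add_div (hs : 0 < s) {u : ℝ} (hu : 0 < u) :
    exp (-u) * u ^ s * (u / s - 2 + s / u) =
      s⁻¹ * (exp (-u) * u ^ (s + 1)) - 2 * (exp (-u) * u ^ s) + s * (exp (-u) * u ^ (s - 1)) := by
  rw [rpow_add_one hu.ne', rpow_sub_one hu.ne']
  field_simp

theorem integrableOn_exp_neg_mul_rpow_mul_div_sub_two_add_div (hs : 0 < s) :
    IntegrableOn (fun u => exp (-u) * u ^ s * (u / s - 2 + s / u)) (Ioi 0) := by
  refine IntegrableOn.congr_fun ?_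
    (fun u hu => (exp_neg_mul_rpow_mul_div_sub_two_add_div hs hu).symm) measurableSet_Ioi
  exact (((integrableOn_exp_neg_mul_rpow (by linarith)).const_mul _).sub
    ((integrableOn_exp_neg_mul_rpow (by linarith)).const_mul _)).add
    ((integrableOn_exp_neg_mul_rpow (by linarith)).const_mul _)

theorem integral_exp_neg_mul_rpow_mul_div_sub_two_add_div (hs : 0 < s) :
    ∫ u in Ioi 0, exp (-u) * u ^ s * (u / s - 2 + s / u) = Gamma (s + 1) / s := by
  have h₁ := integrableOn_exp_neg_mul_rpow (p := s + 1) (by linarith)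
  have h₂ := integrableOn_exp_neg_mul_rpow (p := s) (by linarith)
  have h₃ := integrableOn_exp_neg_mul_rpow (p := s - 1) (by linarith)
  rw [setIntegral_congr_fun measurableSet_Ioi
      (fun u hu => exp_neg_mul_rpow_mul_div_sub_two_add_div hs hu),
    integral_add (by exact (h₁.const_mul _).sub (h₂.const_mul _)) (h₃.const_mul _),
    integral_sub (h₁.const_mul _) (h₂.const_mul _), integral_const_mul, integral_const_mul,
    integral_const_mul, integral_exp_neg_mul_rpow_eq_Gamma (by linarith),
    integral_exp_neg_mul_rpow_eq_Gamma (by linarith),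
    integral_exp_neg_mul_rpow_eq_Gamma (by linarith),
    Gamma_add_one (by positivity), sub_add_cancel, Gamma_add_one hs.ne']
  field_simp
  ring

theorem lintegral_exp_neg_mul_rpow_div_Gamma_mul (hs : 0 < s) {A B : ℝ} (hA : 0 ≤ A)
    (hB : 0 ≤ B) :
    ∫⁻ u in Ioi 0, ENNReal.ofReal (exp (-u) * u ^ s / Gamma (s + 1) * (A + B * (u / s - 2 + s / u)))
      = ENNReal.ofReal (A + B / s) := by
  have hΓ : 0 < Gamma (s + 1) := Gamma_pos_of_pos (by linarith)
  have h₁ := integrableOn_exp_neg_mul_rpow (p := s) (by linarith)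
  have h₂ := integrableOn_exp_neg_mul_rpow_mul_div_sub_two_add_div hs
  have hsplit : ∀ u, exp (-u) * u ^ s / Gamma (s + 1) * (A + B * (u / s - 2 + s / u)) =
      A / Gamma (s + 1) * (exp (-u) * u ^ s) +
        B / Gamma (s + 1) * (exp (-u) * u ^ s * (u / s - 2 + s / u)) := by
    intro u
    ring
  have hnonneg : ∀ u ∈ Ioi (0 : ℝ), 0 ≤ u / s - 2 + s / u := fun u hu => by
    have := sq_log_le_sub_two_add_inv (div_pos hu hs)
    rw [inv_div] at this
    exact (sq_nonneg _).trans this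
  simp only [hsplit]
  rw [← ofReal_integral_eq_lintegral_ofReal (by exact (h₁.const_mul _).add (h₂.const_mul _))
      ((ae_restrict_iff' measurableSet_Ioi).2 (ae_of_all _ fun u hu => by
        have := hnonneg u hu
        have : (0 : ℝ) < u := hu
        positivity)),
    integral_add (h₁.const_mul _) (h₂.const_mul _), integral_const_mul, integral_const_mul,
    integral_exp_neg_mul_rpow_eq_Gamma (by linarith),
    integral_exp_neg_mul_rpow_mul_div_sub_two_add_div hs]
  congr 1
  field_simp

end GammaIntegrals

section HeatKernel

theorem mem_ball_two_mul_sqrt_iff {E : Type*} [SeminormedAddCommGroup E] {x y : E} {t u : ℝ}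
    (ht : 0 < t) : x ∈ ball y (2 * √(t * u)) ↔ ‖y - x‖ ^ 2 / (4 * t) < u := by
  rw [mem_ball, dist_comm, dist_eq_norm, div_lt_iff₀ (by positivity),
    show 2 * √(t * u) = √(u * (4 * t)) by
      rw [show u * (4 * t) = 2 ^ 2 * (t * u) by ring,
        sqrt_mul (by positivity : (0 : ℝ) ≤ 2 ^ 2) (t * u), sqrt_sq zero_le_two],
    lt_sqrt (norm_nonneg _)]

variable {n : ℕ} {t : ℝ}

theorem ofReal_heatKernel_eq_lintegral (ht : 0 < t) (z : EuclideanSpace ℝ (Fin n)) :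
    ENNReal.ofReal (heatKernel n t z) =
      ∫⁻ u in Ioi (‖z‖ ^ 2 / (4 * t)),
        ENNReal.ofReal ((4 * π * t) ^ (-(n : ℝ) / 2) * exp (-u)) := by
  have hexp : IntegrableOn (fun u => exp (-u)) (Ioi (‖z‖ ^ 2 / (4 * t))) := by
    simpa using exp_neg_integrableOn_Ioi (‖z‖ ^ 2 / (4 * t)) one_pos
  rw [← ofReal_integral_eq_lintegral_ofReal (hexp.const_mul _)
      (ae_of_all _ fun u => by positivity), integral_const_mul, integral_exp_neg_Ioi, heatKernel,
    neg_div (4 * t) (‖z‖ ^ 2)]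

theorem lintegral_heatKernel_mul_eq (ht : 0 < t) (y : EuclideanSpace ℝ (Fin n))
    {f : EuclideanSpace ℝ (Fin n) → ℝ≥0∞} (hf : AEMeasurable f) :
    ∫⁻ x, ENNReal.ofReal (heatKernel n t (y - x)) * f x =
      ∫⁻ u in Ioi 0, ENNReal.ofReal ((4 * π * t) ^ (-(n : ℝ) / 2) * exp (-u)) *
        ∫⁻ x in ball y (2 * √(t * u)), f x := by
  set c : ℝ → ℝ≥0∞ := fun u => ENNReal.ofReal ((4 * π * t) ^ (-(n : ℝ) / 2) * exp (-u))
  have hc : Measurable c := by fun_prop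
  have hpt : ∀ x, ENNReal.ofReal (heatKernel n t (y - x)) * f x =
      ∫⁻ u in Ioi 0, c u * (ball y (2 * √(t * u))).indicator f x := by
    intro x
    have hq : 0 ≤ ‖y - x‖ ^ 2 / (4 * t) := by positivity
    calc _ = ∫⁻ u in Ioi (‖y - x‖ ^ 2 / (4 * t)), c u * f x := by
          rw [ofReal_heatKernel_eq_lintegral ht, lintegral_mul_const _ hc]
      _ = ∫⁻ u in Ioi 0, (Ioi (‖y - x‖ ^ 2 / (4 * t))).indicator (fun u => c u * f x) u := by
          rw [lintegral_indicator measurableSet_Ioi, Measure.restrict_restrict measurableSet_Ioi,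
            Ioi_inter_Ioi, sup_eq_left.2 hq]
      _ = _ := by
          congr! 2 with u
          by_cases h : ‖y - x‖ ^ 2 / (4 * t) < u
          · rw [indicator_of_mem (mem_Ioi.2 h),
              indicator_of_mem ((mem_ball_two_mul_sqrt_iff ht).2 h)]
          · rw [indicator_of_notMem (mt mem_Ioi.1 h),
              indicator_of_notMem (mt (mem_ball_two_mul_sqrt_iff ht).1 h), mul_zero]
  rw [lintegral_congr hpt, lintegral_lintegral_swap]
  · refine lintegral_congr fun u => ?_
    rw [lintegral_const_mul' _ _ ENNReal.ofReal_ne_top, lintegral_indicator measurableSet_ball]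
  · set S := {p : EuclideanSpace ℝ (Fin n) × ℝ | dist p.1 y < 2 * √(t * p.2)}
    have hS : MeasurableSet S := measurableSet_lt (by fun_prop) (by fun_prop)
    have hF : Function.uncurry (fun x u => c u * (ball y (2 * √(t * u))).indicator f x) =
        fun p => c p.2 * S.indicator (fun p => f p.1) p := rfl
    rw [hF]
    exact (hc.comp measurable_snd).aemeasurable.mul (hf.comp_fst.indicator hS)

theorem ofReal_mul_volume_ball_two_mul_sqrt [NeZero n] (ht : 0 < t) (y : EuclideanSpace ℝ (Fin n))
    {u : ℝ} (hu : 0 < u) :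
    ENNReal.ofReal ((4 * π * t) ^ (-(n : ℝ) / 2) * exp (-u)) * volume (ball y (2 * √(t * u))) =
      ENNReal.ofReal (exp (-u) * u ^ ((n : ℝ) / 2) / Gamma ((n : ℝ) / 2 + 1)) := by
  have hΓ : 0 < Gamma ((n : ℝ) / 2 + 1) := Gamma_pos_of_pos (by positivity)
  have hpow : (2 * √(t * u)) ^ n * √π ^ n = (4 * π * t) ^ ((n : ℝ) / 2) * u ^ ((n : ℝ) / 2) := by
    have hsq : 4 * π * t * u = (2 * √(t * u) * √π) ^ 2 := by
      rw [mul_pow, mul_pow, sq_sqrt (by positivity), sq_sqrt pi_pos.le]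
      ring
    rw [← mul_pow, ← mul_rpow (by positivity) hu.le, hsq, ← rpow_natCast_mul (by positivity),
      Nat.cast_ofNat, mul_div_cancel₀ _ two_ne_zero, rpow_natCast]
  rw [EuclideanSpace.volume_ball, Fintype.card_fin, ← ENNReal.ofReal_pow (by positivity),
    ← ENNReal.ofReal_mul (by positivity), ← ENNReal.ofReal_mul (by positivity)]
  congr 1
  rw [← mul_div_assoc, hpow, neg_div, rpow_neg (by positivity)]
  field_simp

theorem lintegral_heatKernel_mul_eq_lintegral_setLAverage [NeZero n] (ht : 0 < t)
    (y : EuclideanSpace ℝ (Fin n)) {f : EuclideanSpace ℝ (Fin n) → ℝ≥0∞} (hf : AEMeasurable f) :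
    ∫⁻ x, ENNReal.ofReal (heatKernel n t (y - x)) * f x =
      ∫⁻ u in Ioi 0, ENNReal.ofReal (exp (-u) * u ^ ((n : ℝ) / 2) / Gamma ((n : ℝ) / 2 + 1)) *
        ⨍⁻ x in ball y (2 * √(t * u)), f x ∂volume := by
  rw [lintegral_heatKernel_mul_eq ht y hf]
  refine setLIntegral_congr_fun measurableSet_Ioi fun u (hu : 0 < u) => ?_
  rw [← ofReal_mul_volume_ball_two_mul_sqrt ht y hu, mul_assoc (ENNReal.ofReal _), setLAverage_eq,
    ENNReal.mul_div_cancel (measure_ball_pos _ _ (by positivity)).ne' measure_ball_lt_top.ne]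

theorem lintegral_ofReal_heatKernel [NeZero n] (ht : 0 < t) (y : EuclideanSpace ℝ (Fin n)) :
    ∫⁻ x, ENNReal.ofReal (heatKernel n t (y - x)) = 1 := by
  have h := lintegral_heatKernel_mul_eq_lintegral_setLAverage ht y (f := 1) aemeasurable_const
  simp only [Pi.one_apply, mul_one] at h
  rw [h, setLIntegral_congr_fun measurableSet_Ioi fun u (hu : 0 < u) => by
    rw [setLAverage_const (measure_ball_pos _ _ (by positivity)).ne' measure_ball_lt_top.ne]]
  simpa using lintegral_exp_neg_mul_rpow_div_Gamma_mul
    (half_pos (Nat.cast_pos.2 (NeZero.pos n))) zero_le_one le_rfl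

theorem heatKernel_nonneg (ht : 0 ≤ t) (z : EuclideanSpace ℝ (Fin n)) : 0 ≤ heatKernel n t z := by
  unfold heatKernel
  positivity

theorem integrable_heatKernel [NeZero n] (ht : 0 < t) (y : EuclideanSpace ℝ (Fin n)) :
    Integrable (fun x => heatKernel n t (y - x)) := by
  refine ⟨(by unfold heatKernel; fun_prop : Continuous _).aestronglyMeasurable, ?_⟩
  rw [hasFiniteIntegral_iff_ofReal (ae_of_all _ fun x => heatKernel_nonneg ht.le _),
    lintegral_ofReal_heatKernel ht y]
  exact ENNReal.one_lt_top

theorem integral_heatKernel [NeZero n] (ht : 0 < t) (y : EuclideanSpace ℝ (Fin n)) :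
    ∫ x, heatKernel n t (y - x) = 1 := by
  rw [integral_eq_lintegral_of_nonneg_ae (ae_of_all _ fun x => heatKernel_nonneg ht.le _)
    (integrable_heatKernel ht y).aestronglyMeasurable, lintegral_ofReal_heatKernel ht y,
    ENNReal.toReal_one]

theorem setLAverage_ball_ofReal_sub_setAverage_sq_le [NeZero n] (ht : 0 < t)
    (y : EuclideanSpace ℝ (Fin n)) {φ : EuclideanSpace ℝ (Fin n) → ℝ} {M : ℝ} (hM : 0 ≤ M)
    (hφ : ∀ r, 0 < r → MemLp φ 2 (volume.restrict (ball y r)))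
    (hvar : ∀ r, 0 < r → setVariance volume (ball y r) φ ≤ M ^ 2) {s u : ℝ} (hs : 0 < s)
    (hu : 0 < u) :
    ⨍⁻ x in ball y (2 * √(t * u)),
        ENNReal.ofReal ((φ x - ⨍ x in ball y (2 * √(t * s)), φ x) ^ 2) ∂volume ≤
      ENNReal.ofReal (5 * M ^ 2 + 4 * n ^ 2 * M ^ 2 * (u / s - 2 + s / u)) := by
  set a := ⨍ x in ball y (2 * √(t * s)), φ x
  have hr : 0 < 2 * √(t * u) := by positivity
  have : IsFiniteMeasure (volume.restrict (ball y (2 * √(t * u)))) :=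
    isFiniteMeasure_restrict.2 measure_ball_lt_top.ne
  have hlog : log (2 * √(t * s) / (2 * √(t * u))) ^ 2 ≤ (u / s - 2 + s / u) / 4 := by
    have h := sq_log_le_sub_two_add_inv (div_pos hs hu)
    rw [inv_div] at h
    rw [mul_div_mul_left _ _ two_ne_zero, ← sqrt_div' _ (by positivity),
      mul_div_mul_left _ _ ht.ne', log_sqrt (by positivity), div_pow]
    linarith
  rw [setLAverage_eq, ← ofReal_setAverage (f := fun x => (φ x - a) ^ 2)
    ((hφ _ hr).sub (memLp_const a)).integrable_sq (ae_of_all _ fun _ => sq_nonneg _)]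
  refine ENNReal.ofReal_le_ofReal ((setAverage_sub_setAverage_ball_sq_le (by simp [NeZero.pos]) y
    hM hφ hvar hr (by positivity)).trans ?_)
  rw [finrank_euclideanSpace_fin]
  nlinarith [mul_le_mul_of_nonneg_left hlog (by positivity : (0 : ℝ) ≤ 16 * n ^ 2 * M ^ 2)]

theorem integral_heatKernel_mul_sub_setAverage_sq_le [NeZero n] (ht : 0 < t)
    (y : EuclideanSpace ℝ (Fin n)) {φ : EuclideanSpace ℝ (Fin n) → ℝ} {M : ℝ} (hM : 0 ≤ M)
    (hφ : ∀ r, 0 < r → MemLp φ 2 (volume.restrict (ball y r)))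
    (hvar : ∀ r, 0 < r → setVariance volume (ball y r) φ ≤ M ^ 2) :
    ∫ x, heatKernel n t (y - x) * (φ x - ⨍ x in ball y (2 * √(t * (n / 2))), φ x) ^ 2 ≤
      (5 + 8 * n) * M ^ 2 := by
  set s : ℝ := n / 2
  have hs : 0 < s := half_pos (Nat.cast_pos.2 (NeZero.pos n))
  set a := ⨍ x in ball y (2 * √(t * s)), φ x
  have hφm : AEMeasurable φ := by
    rw [← Measure.restrict_univ (μ := volume), ← iUnion_ball_nat_succ y, aemeasurable_iUnion_iff]
    exact fun k => (hφ _ k.cast_add_one_pos).aestronglyMeasurable.aemeasurable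
  have hdev : AEMeasurable fun x => (φ x - a) ^ 2 := (hφm.sub_const a).pow_const 2
  have hlin : ∫⁻ x, ENNReal.ofReal (heatKernel n t (y - x) * (φ x - a) ^ 2) ≤
      ENNReal.ofReal (5 * M ^ 2 + 4 * n ^ 2 * M ^ 2 / s) := by
    calc _ = ∫⁻ x, ENNReal.ofReal (heatKernel n t (y - x)) * ENNReal.ofReal ((φ x - a) ^ 2) :=
          lintegral_congr fun x => ENNReal.ofReal_mul (heatKernel_nonneg ht.le _)
      _ = ∫⁻ u in Ioi 0, ENNReal.ofReal (exp (-u) * u ^ s / Gamma (s + 1)) *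
            ⨍⁻ x in ball y (2 * √(t * u)), ENNReal.ofReal ((φ x - a) ^ 2) ∂volume :=
          lintegral_heatKernel_mul_eq_lintegral_setLAverage ht y
            (ENNReal.measurable_ofReal.comp_aemeasurable hdev)
      _ ≤ ∫⁻ u in Ioi 0, ENNReal.ofReal (exp (-u) * u ^ s / Gamma (s + 1) *
            (5 * M ^ 2 + 4 * n ^ 2 * M ^ 2 * (u / s - 2 + s / u))) :=
          setLIntegral_mono' measurableSet_Ioi fun u (hu : 0 < u) => by
            rw [ENNReal.ofReal_mul (by positivity)]
            gcongr
            exact setLAverage_ball_ofReal_sub_setAverage_sq_le ht y hM hφ hvar hs hu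
      _ = _ := lintegral_exp_neg_mul_rpow_div_Gamma_mul hs (by positivity) (by positivity)
  calc _ = (∫⁻ x, ENNReal.ofReal (heatKernel n t (y - x) * (φ x - a) ^ 2)).toReal :=
        integral_eq_lintegral_of_nonneg_ae
          (ae_of_all _ fun x => mul_nonneg (heatKernel_nonneg ht.le _) (sq_nonneg _))
          ((integrable_heatKernel ht y).aestronglyMeasurable.mul hdev.aestronglyMeasurable)
    _ ≤ 5 * M ^ 2 + 4 * n ^ 2 * M ^ 2 / s := ENNReal.toReal_le_of_le_ofReal (by positivity) hlin
    _ = (5 + 8 * n) * M ^ 2 := by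
        field_simp
        ring

end HeatKernel

/-- If the quadratic BMO seminorm of `φ` is at most `M` on every ball, then the
heat-semigroup variance satisfies `(H_t*φ²)(y) − ((H_t*φ)(y))² ≤ (C√n·M)²` for all
`(y,t)`, i.e. `‖φ‖_H ≤ C√n‖φ‖_*`. -/
theorem heat_bmo_norm_le :
    ∃ C : ℝ, 0 < C ∧ ∀ (n : ℕ), 1 ≤ n → ∀ (φ : EuclideanSpace ℝ (Fin n) → ℝ) (M : ℝ), 0 ≤ M →
      (∀ (c : EuclideanSpace ℝ (Fin n)) (r : ℝ), 0 < r →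
        MemLp φ 2 (volume.restrict (Metric.ball c r))) →
      (∀ (c : EuclideanSpace ℝ (Fin n)) (r : ℝ), 0 < r →
        (⨍ x in Metric.ball c r, (φ x) ^ 2) - (⨍ x in Metric.ball c r, φ x) ^ 2 ≤ M ^ 2) →
      (∀ (y : EuclideanSpace ℝ (Fin n)) (t : ℝ), 0 < t →
        Integrable (fun x => heatKernel n t (y - x) * φ x)) →
      (∀ (y : EuclideanSpace ℝ (Fin n)) (t : ℝ), 0 < t →
        Integrable (fun x => heatKernel n t (y - x) * (φ x) ^ 2)) →
      ∀ (y : EuclideanSpace ℝ (Fin n)) (t : ℝ), 0 < t →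
        (∫ x, heatKernel n t (y - x) * (φ x) ^ 2) -
            (∫ x, heatKernel n t (y - x) * φ x) ^ 2 ≤
          (C * Real.sqrt n * M) ^ 2 := by
  refine ⟨4, by norm_num, fun n hn φ M hM hL2 hVar hI1 hI2 y t ht => ?_⟩
  have : NeZero n := ⟨by omega⟩
  set a := ⨍ x in ball y (2 * √(t * (n / 2))), φ x
  have hbias := integral_mul_sub_sq (integrable_heatKernel ht y) (hI1 y t ht) (hI2 y t ht)
    (integral_heatKernel ht y) a
  have hn' : (1 : ℝ) ≤ n := by exact_mod_cast hn
  calc _ ≤ ∫ x, heatKernel n t (y - x) * (φ x - a) ^ 2 := by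
        rw [hbias]
        exact le_add_of_nonneg_right (sq_nonneg _)
    _ ≤ (5 + 8 * n) * M ^ 2 := integral_heatKernel_mul_sub_setAverage_sq_le ht y hM (hL2 y) (hVar y)
    _ ≤ (4 * √n * M) ^ 2 := by
        rw [mul_pow, mul_pow, sq_sqrt (Nat.cast_nonneg n)]
        nlinarith [sq_nonneg M]
end
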